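/- arXiv:2008.04440 — 7 statements merged into one kernel-verified Lean document; each statement's English description precedes it below -/
import Mathlib

section
/- Let B, k, n, μ be integers satisfying B² + μ² = kn. Then both quadruples (−B, B+k, B+n, B+k+n−2μ) and (−B, B+k, B+n, B+k+n+2μ) satisfy Descartes' circle equation 2(a² + b² + c² + d²) = (a + b + c + d)². -/
theorem descartes_defect_eq {R : Type*} [CommRing R] (B k n μ : R) :
    2 * ((-B) ^ 2 + (B + k) ^ 2 + (B + n) ^ 2 + (B + k + n + 2 * μ) ^ 2) -
        (-B + (B + k) + (B + n) + (B + k + n + 2 * μ)) ^ 2 =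
      4 * (B ^ 2 + μ ^ 2 - k * n) := by
  ring

theorem descartes_of_master_eq {R : Type*} [CommRing R] {B k n μ : R}
    (h : B ^ 2 + μ ^ 2 = k * n) :
    2 * ((-B) ^ 2 + (B + k) ^ 2 + (B + n) ^ 2 + (B + k + n + 2 * μ) ^ 2) =
      (-B + (B + k) + (B + n) + (B + k + n + 2 * μ)) ^ 2 := by
  rw [← sub_eq_zero, descartes_defect_eq, h, sub_self, mul_zero]

theorem master_eq_gives_descartes (B k n μ : ℤ) (h : B ^ 2 + μ ^ 2 = k * n) :
    (2 * ((-B) ^ 2 + (B + k) ^ 2 + (B + n) ^ 2 + (B + k + n - 2 * μ) ^ 2) =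
        (-B + (B + k) + (B + n) + (B + k + n - 2 * μ)) ^ 2) ∧
    (2 * ((-B) ^ 2 + (B + k) ^ 2 + (B + n) ^ 2 + (B + k + n + 2 * μ) ^ 2) =
        (-B + (B + k) + (B + n) + (B + k + n + 2 * μ)) ^ 2) := by
  have h_neg : B ^ 2 + (-μ) ^ 2 = k * n := by rwa [neg_sq]
  refine ⟨?_, descartes_of_master_eq h⟩
  simpa only [mul_neg, ← sub_eq_add_neg] using descartes_of_master_eq h_neg
end

section
/- Let B, k, n, d be integers such that the quadruple (−B, B+k, B+n, d) satisfies Descartes' circle equation 2(B² + (B+k)² + (B+n)² + d²) = (−B + (B+k) + (B+n) + d)². Then there exists an integer μ such that d = B + k + n − 2μ and B² + μ² = kn. -/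
/-!
The Descartes equation forces `-B + (B + k) + (B + n) + d` to be even, since its square is even;
so `d ≡ B + k + n` modulo 2 and `μ := (B + k + n - d) / 2` is an integer. Substituting
`d = B + k + n - 2μ`, twice the sum of the squares minus the square of the sum becomes
`4 (B² + μ² - k n)`, so the Descartes equation is exactly the master equation.
-/

theorem Int.even_add_of_descartes {a b c d : ℤ}
    (h : 2 * (a ^ 2 + b ^ 2 + c ^ 2 + d ^ 2) = (a + b + c + d) ^ 2) : Even (a + b + c + d) :=
  (Int.even_pow.mp ⟨_, h.symm.trans (two_mul _)⟩).1

theorem descartes_gives_master (B k n d : ℤ)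
    (h : 2 * (B ^ 2 + (B + k) ^ 2 + (B + n) ^ 2 + d ^ 2) =
        (-B + (B + k) + (B + n) + d) ^ 2) :
    ∃ μ : ℤ, d = B + k + n - 2 * μ ∧ B ^ 2 + μ ^ 2 = k * n := by
  obtain ⟨m, hm⟩ : Even (-B + (B + k) + (B + n) + d) :=
    Int.even_add_of_descartes (by rwa [neg_sq])
  obtain ⟨μ, rfl⟩ : ∃ μ, d = B + k + n - 2 * μ := ⟨m - d, by linarith⟩
  refine ⟨μ, rfl, ?_⟩
  have hmaster : 4 * (B ^ 2 + μ ^ 2) = 4 * (k * n) := by linear_combination h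
  exact (mul_right_inj' four_ne_zero).mp hmaster
end

section
/- Let B, k, n, μ be natural numbers satisfying B² + μ² = kn. Then gcd(B, gcd(k, n)) = 1 if and only if the greatest common divisor of the five integers B, B+k, B+n, B+k+n−2μ, B+k+n+2μ equals 1. -/
/-! Test both gcds against primes. The common divisors of the five bends are exactly the common
divisors of `B`, `k`, `n` and `2μ`, and a prime dividing `B`, `k` and `n` divides `μ` because
`μ² = kn - B²`. -/

theorem dvd_gasket_bends_iff {R : Type*} [CommRing R] {d b k n m : R} :
    (d ∣ b ∧ d ∣ b + k ∧ d ∣ b + n ∧ d ∣ b + k + n - 2 * m ∧ d ∣ b + k + n + 2 * m) ↔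
      (d ∣ b ∧ d ∣ k ∧ d ∣ n ∧ d ∣ 2 * m) := by
  constructor
  · rintro ⟨hb, hbk, hbn, hminus, -⟩
    have hk : d ∣ k := (dvd_add_right hb).mp hbk
    have hn : d ∣ n := (dvd_add_right hb).mp hbn
    exact ⟨hb, hk, hn, (dvd_sub_right ((hb.add hk).add hn)).mp hminus⟩
  · rintro ⟨hb, hk, hn, hm⟩
    have hbkn : d ∣ b + k + n := (hb.add hk).add hn
    exact ⟨hb, hb.add hk, hb.add hn, hbkn.sub hm, hbkn.add hm⟩

theorem Prime.dvd_of_sq_add_sq_eq_mul {R : Type*} [CommRing R] {p b m k n : R} (hp : Prime p)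
    (hb : p ∣ b) (hk : p ∣ k) (h : b ^ 2 + m ^ 2 = k * n) : p ∣ m := by
  have hm2 : p ∣ k * n - b ^ 2 := (hk.mul_right n).sub (dvd_pow hb two_ne_zero)
  rw [← h, add_sub_cancel_left] at hm2
  exact hp.dvd_of_dvd_pow hm2

theorem gasket_irreducible_iff (B k n μ : ℕ) (h : B ^ 2 + μ ^ 2 = k * n) :
    Nat.gcd B (Nat.gcd k n) = 1 ↔
      Int.gcd (B : ℤ) (Int.gcd ((B : ℤ) + k) (Int.gcd ((B : ℤ) + n)
        (Int.gcd ((B : ℤ) + k + n - 2 * μ) ((B : ℤ) + k + n + 2 * μ)))) = 1 := by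
  rw [Nat.eq_one_iff_not_exists_prime_dvd, Nat.eq_one_iff_not_exists_prime_dvd]
  refine forall_congr' fun p => imp_congr_right fun hp => not_congr ?_
  simp only [Nat.dvd_gcd_iff, Int.dvd_gcd_iff, Int.natCast_dvd_natCast]
  rw [← Int.natCast_dvd_natCast (n := B), ← Int.natCast_dvd_natCast (n := k),
    ← Int.natCast_dvd_natCast (n := n), dvd_gasket_bends_iff]
  have hZ : (B : ℤ) ^ 2 + (μ : ℤ) ^ 2 = k * n := by exact_mod_cast h
  constructor
  · rintro ⟨hB, hk, hn⟩
    exact ⟨hB, hk, hn,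
      ((Nat.prime_iff_prime_int.mp hp).dvd_of_sq_add_sq_eq_mul hB hk hZ).mul_left 2⟩
  · rintro ⟨hB, hk, hn, -⟩
    exact ⟨hB, hk, hn⟩
end

section
/- Let B, k, n, μ be real numbers with B > 0, k > 0, n > 0, μ ≥ 0, 2μ ≤ k, and B² + μ² = kn. Set b₂ = B + n, b₃ = B + k + n − 2μ, b₄ = B + k + n + 2μ, and define points in the plane: c₂ = ((B² − μ²)/(Bk b₂), 2μ/(k b₂)), c₃ = ((B² − (k−μ)²)/(Bk b₃), −2(k−μ)/(k b₃)), c₄ = ((B² − (k+μ)²)/(Bk b₄), 2(k+μ)/(k b₄)). Then for each i ∈ {2,3,4}, the distance from the origin to cᵢ equals 1/B − 1/bᵢ; that is, each circle of radius 1/bᵢ centered at cᵢ is internally tangent to the circle of radius 1/B centered at the origin. -/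
/-!
In complex notation the circle of bend `B + n` has centre `(B + iμ)² / (B k (B + n))`, and
`|(B + iμ)²| = B² + μ² = k n`, so its distance from the origin is `n / (B (B + n)) = 1/B - 1/(B + n)`.
The other two circles are of the same form: the solution `(B, k, n, μ)` of `B² + μ² = k n` gives the
solutions `(B, k, n + k ± 2μ, μ ± k)`, whose bends `B + n + k ± 2μ` are `b₄` and `b₃`.
-/

lemma dist_zero_toLp_two (x y : ℝ) :
    dist (0 : EuclideanSpace ℝ (Fin 2)) (WithLp.toLp 2 ![x, y]) = √(x ^ 2 + y ^ 2) := by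
  rw [dist_zero_left, EuclideanSpace.norm_eq]
  simp [Fin.sum_univ_two]

lemma dist_zero_tangent_center (B k n μ : ℝ) (hB : 0 < B) (hk : 0 < k)
    (h : B ^ 2 + μ ^ 2 = k * n) :
    dist (0 : EuclideanSpace ℝ (Fin 2))
        (WithLp.toLp 2 ![(B ^ 2 - μ ^ 2) / (B * k * (B + n)), 2 * μ / (k * (B + n))]) =
      1 / B - 1 / (B + n) := by
  have hn : 0 < n := (mul_pos_iff_of_pos_left hk).1 (h ▸ by positivity)
  have hb : 0 < B + n := by linarith
  have hsq : ((B ^ 2 - μ ^ 2) / (B * k * (B + n))) ^ 2 + (2 * μ / (k * (B + n))) ^ 2 =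
      (n / (B * (B + n))) ^ 2 := by
    have pythagoras : (B ^ 2 - μ ^ 2) ^ 2 + (2 * B * μ) ^ 2 = (k * n) ^ 2 := by
      rw [← h]; ring
    field_simp
    linear_combination pythagoras
  have hdiff : 1 / B - 1 / (B + n) = n / (B * (B + n)) := by field_simp; ring
  rw [dist_zero_toLp_two, hsq, hdiff, Real.sqrt_sq (by positivity)]

theorem inner_tangency_general (B k n μ : ℝ) (hB : 0 < B) (hk : 0 < k) (h : B ^ 2 + μ ^ 2 = k * n) :
    let b₂ := B + n
    let b₃ := B + k + n - 2 * μ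
    let b₄ := B + k + n + 2 * μ
    let c₂ : EuclideanSpace ℝ (Fin 2) :=
      WithLp.toLp 2 ![(B ^ 2 - μ ^ 2) / (B * k * b₂), 2 * μ / (k * b₂)]
    let c₃ : EuclideanSpace ℝ (Fin 2) :=
      WithLp.toLp 2 ![(B ^ 2 - (k - μ) ^ 2) / (B * k * b₃), -(2 * (k - μ)) / (k * b₃)]
    let c₄ : EuclideanSpace ℝ (Fin 2) :=
      WithLp.toLp 2 ![(B ^ 2 - (k + μ) ^ 2) / (B * k * b₄), 2 * (k + μ) / (k * b₄)]
    dist (0 : EuclideanSpace ℝ (Fin 2)) c₂ = 1 / B - 1 / b₂ ∧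
    dist (0 : EuclideanSpace ℝ (Fin 2)) c₃ = 1 / B - 1 / b₃ ∧
    dist (0 : EuclideanSpace ℝ (Fin 2)) c₄ = 1 / B - 1 / b₄ := by
  dsimp only
  rw [show B + k + n - 2 * μ = B + (k + n - 2 * μ) by ring,
    show B + k + n + 2 * μ = B + (k + n + 2 * μ) by ring, ← neg_sq (k - μ), ← mul_neg]
  exact ⟨dist_zero_tangent_center B k n μ hB hk h,
    dist_zero_tangent_center B k _ _ hB hk (by linear_combination h),
    dist_zero_tangent_center B k _ _ hB hk (by linear_combination h)⟩

theorem inner_tangency (B k n μ : ℝ) (hB : 0 < B) (hk : 0 < k) (hn : 0 < n)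
    (hμ : 0 ≤ μ) (hμk : 2 * μ ≤ k) (h : B ^ 2 + μ ^ 2 = k * n) :
    let b₂ := B + n
    let b₃ := B + k + n - 2 * μ
    let b₄ := B + k + n + 2 * μ
    let c₂ : EuclideanSpace ℝ (Fin 2) :=
      WithLp.toLp 2 ![(B ^ 2 - μ ^ 2) / (B * k * b₂), 2 * μ / (k * b₂)]
    let c₃ : EuclideanSpace ℝ (Fin 2) :=
      WithLp.toLp 2 ![(B ^ 2 - (k - μ) ^ 2) / (B * k * b₃), -(2 * (k - μ)) / (k * b₃)]
    let c₄ : EuclideanSpace ℝ (Fin 2) :=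
      WithLp.toLp 2 ![(B ^ 2 - (k + μ) ^ 2) / (B * k * b₄), 2 * (k + μ) / (k * b₄)]
    dist (0 : EuclideanSpace ℝ (Fin 2)) c₂ = 1 / B - 1 / b₂ ∧
    dist (0 : EuclideanSpace ℝ (Fin 2)) c₃ = 1 / B - 1 / b₃ ∧
    dist (0 : EuclideanSpace ℝ (Fin 2)) c₄ = 1 / B - 1 / b₄ :=
  inner_tangency_general B k n μ hB hk h
end

section
/- Let B, k, n, μ be real numbers with B > 0, k > 0, n > 0, μ ≥ 0, 2μ ≤ k, and B² + μ² = kn. Set b₂ = B + n, b₃ = B + k + n − 2μ, b₄ = B + k + n + 2μ, and define points in the plane: c₂ = ((B² − μ²)/(Bk b₂), 2μ/(k b₂)), c₃ = ((B² − (k−μ)²)/(Bk b₃), −2(k−μ)/(k b₃)), c₄ = ((B² − (k+μ)²)/(Bk b₄), 2(k+μ)/(k b₄)). Then the distance from c₂ to c₃ equals 1/b₂ + 1/b₃, and the distance from c₂ to c₄ equals 1/b₂ + 1/b₄; that is, the circle centered at c₂ of radius 1/b₂ is externally tangent to the circles centered at c₃, c₄ of radii 1/b₃, 1/b₄. -/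
/-!
Write each centre as its symbol divided by its bend. Two circles of positive bends `b, b'` and
symbols `s, s'` are externally tangent exactly when `‖s b' - s' b‖ = b + b'`. For the pair
`(c₂, c₄)`, the relation `k n = B² + μ²` makes the coordinates of `s₂ b₄ - s₄ b₂` factor as
`(k + 2μ)(2B + k)/k` and `2(μ - B)(μ + B + k)/k`, while
`k (b₂ + b₄) = 2B² + 2μ² + k² + 2Bk + 2kμ`, so the condition becomes a polynomial identity.
Replacing `μ` by `-μ` and reflecting in the horizontal axis turns `(c₂, c₄)` into `(c₂, c₃)`.
All bends are positive since `k b₂ = kB + B² + μ²` and `k b₄ = kB + B² + (k + μ)²`.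
-/

theorem dist_centers_eq_inv_add_inv {x y b x' y' b' : ℝ} (hb : 0 < b) (hb' : 0 < b')
    (h : (x * b' - x' * b) ^ 2 + (y * b' - y' * b) ^ 2 = (b + b') ^ 2) :
    dist !₂[x / b, y / b] !₂[x' / b', y' / b'] = 1 / b + 1 / b' := by
  have hsq : (x / b - x' / b') ^ 2 + (y / b - y' / b') ^ 2 = (1 / b + 1 / b') ^ 2 := by
    field_simp
    linear_combination h
  rw [EuclideanSpace.dist_eq, Fin.sum_univ_two]
  simp only [Matrix.cons_val_zero, Matrix.cons_val_one, Real.dist_eq, sq_abs]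
  rw [hsq, Real.sqrt_sq (by positivity)]

theorem bend_pos {B k n μ : ℝ} (hB : 0 < B) (hk : 0 < k) (h : B ^ 2 + μ ^ 2 = k * n) :
    0 < B + n ∧ 0 < B + k + n + 2 * μ := by
  constructor
  · refine pos_of_mul_pos_right (a := k) ?_ hk.le
    nlinarith
  · refine pos_of_mul_pos_right (a := k) ?_ hk.le
    nlinarith [sq_nonneg (k + μ)]

theorem outer_tangency_symbols {B k n μ : ℝ} (hB : B ≠ 0) (hk : k ≠ 0)
    (h : B ^ 2 + μ ^ 2 = k * n) :
    ((B ^ 2 - μ ^ 2) / (B * k) * (B + k + n + 2 * μ)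
        - (B ^ 2 - (k + μ) ^ 2) / (B * k) * (B + n)) ^ 2
      + (2 * μ / k * (B + k + n + 2 * μ) - 2 * (k + μ) / k * (B + n)) ^ 2
      = (B + n + (B + k + n + 2 * μ)) ^ 2 := by
  have hx : (B ^ 2 - μ ^ 2) / (B * k) * (B + k + n + 2 * μ)
      - (B ^ 2 - (k + μ) ^ 2) / (B * k) * (B + n) = (k + 2 * μ) * (2 * B + k) / k := by
    field_simp
    linear_combination -(k + 2 * μ) * h
  have hy : 2 * μ / k * (B + k + n + 2 * μ) - 2 * (k + μ) / k * (B + n)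
      = 2 * (μ - B) * (μ + B + k) / k := by
    field_simp
    linear_combination h
  have hsum : B + n + (B + k + n + 2 * μ) =
      (2 * B ^ 2 + 2 * μ ^ 2 + k ^ 2 + 2 * B * k + 2 * k * μ) / k := by
    field_simp
    linear_combination -2 * h
  rw [hx, hy, hsum]
  field_simp
  ring

theorem outer_tangency_general (B k n μ : ℝ) (hB : 0 < B) (hk : 0 < k)
    (h : B ^ 2 + μ ^ 2 = k * n) :
    let b₂ := B + n
    let b₃ := B + k + n - 2 * μ
    let b₄ := B + k + n + 2 * μ
    let c₂ : EuclideanSpace ℝ (Fin 2) :=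
      !₂[(B ^ 2 - μ ^ 2) / (B * k * b₂), 2 * μ / (k * b₂)]
    let c₃ : EuclideanSpace ℝ (Fin 2) :=
      !₂[(B ^ 2 - (k - μ) ^ 2) / (B * k * b₃), -(2 * (k - μ)) / (k * b₃)]
    let c₄ : EuclideanSpace ℝ (Fin 2) :=
      !₂[(B ^ 2 - (k + μ) ^ 2) / (B * k * b₄), 2 * (k + μ) / (k * b₄)]
    dist c₂ c₃ = 1 / b₂ + 1 / b₃ ∧ dist c₂ c₄ = 1 / b₂ + 1 / b₄ := by
  intro b₂ b₃ b₄ c₂ c₃ c₄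
  have h' : B ^ 2 + (-μ) ^ 2 = k * n := by rw [neg_sq, h]
  obtain ⟨hb₂, hb₄⟩ := bend_pos hB hk h
  have hb₃ : 0 < b₃ := by linarith [(bend_pos hB hk h').2]
  constructor
  · have hsymb := outer_tangency_symbols hB.ne' hk.ne' h'
    have key := dist_centers_eq_inv_add_inv (x := (B ^ 2 - μ ^ 2) / (B * k)) (y := 2 * μ / k)
      (x' := (B ^ 2 - (k - μ) ^ 2) / (B * k)) (y' := -(2 * (k - μ)) / k) hb₂ hb₃
      (by linear_combination hsymb)
    simpa only [div_div] using key
  · have hsymb := outer_tangency_symbols hB.ne' hk.ne' h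
    have key := dist_centers_eq_inv_add_inv (x := (B ^ 2 - μ ^ 2) / (B * k)) (y := 2 * μ / k)
      (x' := (B ^ 2 - (k + μ) ^ 2) / (B * k)) (y' := 2 * (k + μ) / k) hb₂ hb₄
      (by linear_combination hsymb)
    simpa only [div_div] using key

theorem outer_tangency (B k n μ : ℝ) (hB : 0 < B) (hk : 0 < k) (hn : 0 < n)
    (hμ : 0 ≤ μ) (hμk : 2 * μ ≤ k) (h : B ^ 2 + μ ^ 2 = k * n) :
    let b₂ := B + n
    let b₃ := B + k + n - 2 * μ
    let b₄ := B + k + n + 2 * μ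
    let c₂ : EuclideanSpace ℝ (Fin 2) :=
      !₂[(B ^ 2 - μ ^ 2) / (B * k * b₂), 2 * μ / (k * b₂)]
    let c₃ : EuclideanSpace ℝ (Fin 2) :=
      !₂[(B ^ 2 - (k - μ) ^ 2) / (B * k * b₃), -(2 * (k - μ)) / (k * b₃)]
    let c₄ : EuclideanSpace ℝ (Fin 2) :=
      !₂[(B ^ 2 - (k + μ) ^ 2) / (B * k * b₄), 2 * (k + μ) / (k * b₄)]
    dist c₂ c₃ = 1 / b₂ + 1 / b₃ ∧ dist c₂ c₄ = 1 / b₂ + 1 / b₄ :=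
  outer_tangency_general B k n μ hB hk h
end

section
/- Let B, k, n, μ be natural numbers with k ≠ 0 and B² + μ² = kn. If k divides 2B², then k divides 2μ² and k divides 2Bμ. -/
theorem UniqueFactorizationMonoid.dvd_of_dvd_of_dvd_of_mul_eq_sq {R : Type*} [CommMonoidWithZero R]
    [UniqueFactorizationMonoid R] [NormalizationMonoid R] {k a b c : R}
    (ha : k ∣ a) (hb : k ∣ b) (habc : a * b = c ^ 2) : k ∣ c :=
  (pow_dvd_pow_iff_dvd two_ne_zero).mp (habc ▸ sq k ▸ mul_dvd_mul ha hb)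

theorem divisibility_transfer_general (B k n μ : ℕ)
    (h : B ^ 2 + μ ^ 2 = k * n) (hdvd : k ∣ 2 * B ^ 2) :
    k ∣ 2 * μ ^ 2 ∧ k ∣ 2 * B * μ := by
  have hsum : k ∣ 2 * B ^ 2 + 2 * μ ^ 2 := ⟨2 * n, by rw [← mul_add, h]; ring⟩
  have hμ : k ∣ 2 * μ ^ 2 := (Nat.dvd_add_right hdvd).mp hsum
  exact ⟨hμ, UniqueFactorizationMonoid.dvd_of_dvd_of_dvd_of_mul_eq_sq hdvd hμ (by ring)⟩

theorem divisibility_transfer (B k n μ : ℕ) (hk : k ≠ 0)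
    (h : B ^ 2 + μ ^ 2 = k * n) (hdvd : k ∣ 2 * B ^ 2) :
    k ∣ 2 * μ ^ 2 ∧ k ∣ 2 * B * μ :=
  divisibility_transfer_general B k n μ h hdvd
end

section
/- Let B, k, n, μ be integers with k > 0, B² + μ² = kn, and k ∣ 2B². Then each of the following four triples consists of integers and satisfies Δ² + Γ² = H²: (n − 2B²/k, 2μB/k, n); (k + n − 2μ − 2B²/k, 2B − 2μB/k, k + n − 2μ); (2B + k − n + 2B²/k, 2μ + 2μB/k, 2B + k + n); and (2B + k − 2μ − 4Bμ/k, 2(B − n + μ + 2B²/k), 2B + 2n + k − 2μ). Equivalently, there exist integers Δ, Γ for each triple with kΔ and kΓ equal to k times the displayed rational values, and Δ² + Γ² = H². -/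
/-! Clearing denominators, each claimed triple is `(a / k, b / k, c)` with `a² + b² = (k c)²` a
polynomial consequence of `B² + μ² = k n`. The only integrality that is not immediate is
`k ∣ 2 μ B`: from `k ∣ 2 B²` and `k ∣ 2 μ² = 2 k n - 2 B²` we get `k² ∣ (2 μ B)² = 2 μ² · 2 B²`,
and `ℤ` is integrally closed. -/

theorem dvd_mul_mul_of_dvd_mul_sq {R : Type*} [CommRing R] [IsDomain R] [IsIntegrallyClosed R]
    {k c a b : R} (ha : k ∣ c * a ^ 2) (hb : k ∣ c * b ^ 2) : k ∣ c * a * b := by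
  have hsq : k ^ 2 ∣ (c * a * b) ^ 2 := by
    rw [show (c * a * b) ^ 2 = c * a ^ 2 * (c * b ^ 2) by ring, sq]
    exact mul_dvd_mul ha hb
  exact (IsIntegrallyClosed.pow_dvd_pow_iff two_ne_zero).mp hsq

theorem exists_sq_add_sq_eq_sq_of_dvd {R : Type*} [CommRing R] [IsDomain R]
    {k a b c : R} (hk : k ≠ 0) (ha : k ∣ a) (hb : k ∣ b) (habc : a ^ 2 + b ^ 2 = (k * c) ^ 2) :
    ∃ Δ Γ : R, k * Δ = a ∧ k * Γ = b ∧ Δ ^ 2 + Γ ^ 2 = c ^ 2 := by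
  obtain ⟨Δ, rfl⟩ := ha
  obtain ⟨Γ, rfl⟩ := hb
  refine ⟨Δ, Γ, rfl, rfl, mul_left_cancel₀ (pow_ne_zero 2 hk) ?_⟩
  linear_combination habc

theorem integer_pythagorean_triples (B k n μ : ℤ) (hk : 0 < k)
    (h : B ^ 2 + μ ^ 2 = k * n) (hdvd : k ∣ 2 * B ^ 2) :
    (∃ Δ Γ : ℤ, k * Δ = k * n - 2 * B ^ 2 ∧ k * Γ = 2 * μ * B ∧
      Δ ^ 2 + Γ ^ 2 = n ^ 2) ∧
    (∃ Δ Γ : ℤ, k * Δ = k * (k + n - 2 * μ) - 2 * B ^ 2 ∧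
      k * Γ = 2 * B * k - 2 * μ * B ∧
      Δ ^ 2 + Γ ^ 2 = (k + n - 2 * μ) ^ 2) ∧
    (∃ Δ Γ : ℤ, k * Δ = k * (2 * B + k - n) + 2 * B ^ 2 ∧
      k * Γ = 2 * μ * k + 2 * μ * B ∧
      Δ ^ 2 + Γ ^ 2 = (2 * B + k + n) ^ 2) ∧
    (∃ Δ Γ : ℤ, k * Δ = k * (2 * B + k - 2 * μ) - 4 * B * μ ∧
      k * Γ = 2 * k * (B - n + μ) + 4 * B ^ 2 ∧
      Δ ^ 2 + Γ ^ 2 = (2 * B + 2 * n + k - 2 * μ) ^ 2) := by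
  have hμ : k ∣ 2 * μ ^ 2 := by
    rw [show 2 * μ ^ 2 = k * (2 * n) - 2 * B ^ 2 by linear_combination 2 * h]
    exact dvd_sub (dvd_mul_right k _) hdvd
  have hμB : k ∣ 2 * μ * B := dvd_mul_mul_of_dvd_mul_sq hμ hdvd
  have hBμ : k ∣ 4 * B * μ := by
    rw [show 4 * B * μ = 2 * (2 * μ * B) by ring]; exact hμB.mul_left 2
  have hB : k ∣ 4 * B ^ 2 := by
    rw [show 4 * B ^ 2 = 2 * (2 * B ^ 2) by ring]; exact hdvd.mul_left 2
  have hk0 := hk.ne'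
  refine ⟨exists_sq_add_sq_eq_sq_of_dvd hk0 (dvd_sub (dvd_mul_right k n) hdvd) hμB ?_,
    exists_sq_add_sq_eq_sq_of_dvd hk0 (dvd_sub (dvd_mul_right k _) hdvd)
      (dvd_sub (dvd_mul_left k _) hμB) ?_,
    exists_sq_add_sq_eq_sq_of_dvd hk0 (dvd_add (dvd_mul_right k _) hdvd)
      (dvd_add (dvd_mul_left k _) hμB) ?_,
    exists_sq_add_sq_eq_sq_of_dvd hk0 (dvd_sub (dvd_mul_right k _) hBμ)
      (dvd_add ((dvd_mul_left k 2).mul_right _) hB) ?_⟩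
  · linear_combination 4 * B ^ 2 * h
  · linear_combination 4 * B ^ 2 * h
  · linear_combination (4 * k * (2 * B + k) + 4 * B ^ 2) * h
  · linear_combination (16 * k * B + 16 * B ^ 2 + 4 * k ^ 2) * h
end
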